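/- Let ν ≥ 0, α > -1, and let p_{n,m}^α be as above (monic type-2 multiple orthogonal polynomials for weights x^α ρ_ν, x^α ρ_(ν+1)). Then (p_{n,n-1}^α)'(x) = (2n-1) · p_{n-1,n-1}^(α+1)(x) for all n ≥ 1. -/

import Mathlib

/-!
Differentiating under the integral sign gives `ρ_μ' = -ρ_(μ-1)`, and integrating
`t^μ e^(-t-x/t)` by parts gives `ρ_(μ+1) = μ ρ_μ + x ρ_(μ-1)`. Hence
`(x^β ρ_μ)' = x^(β-1) ((β+μ) ρ_μ - ρ_(μ+1))`, and an integration by parts against a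
polynomial, whose boundary terms vanish because `ρ_μ(x) ≤ ⌈c⌉! Γ(μ+c) x^(-c)` for every
`c ≥ 0` with `μ + c > 0`, turns the orthogonality relations of `P = p_(n,n-1)^α` into those of
`P'` for the exponent `α + 1`; for the weight `ρ_(ν+1)` one also uses
`ρ_(ν+2) = (ν+1) ρ_(ν+1) + x ρ_ν`. As `P'` has degree `2n-2` and leading coefficient `2n-1`,
`P'/(2n-1)` is `p_(n-1,n-1)^(α+1)`.
-/

open MeasureTheory Real Set

noncomputable def rho (ν x : ℝ) : ℝ :=
  ∫ t in Set.Ioi (0:ℝ), t ^ (ν - 1) * Real.exp (-t - x / t)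

noncomputable def K (ν z : ℝ) : ℝ :=
  (1/2) * (z/2) ^ ν * ∫ t in Set.Ioi (0:ℝ), Real.exp (-t - z^2 / (4*t)) * t ^ (-ν - 1)


/-- `p` is the monic type-2 multiple orthogonal polynomial of multi-index `(n,m)`
for the weights `x^α ρ_ν` and `x^α ρ_{ν+1}` on `(0,∞)`. -/
def IsType2MOP (ν α : ℝ) (n m : ℕ) (p : Polynomial ℝ) : Prop :=
  p.Monic ∧ p.natDegree = n + m ∧
  (∀ k : ℕ, k < n → ∫ x in Set.Ioi (0:ℝ), p.eval x * x ^ ((k : ℝ) + α) * rho ν x = 0) ∧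
  (∀ k : ℕ, k < m → ∫ x in Set.Ioi (0:ℝ), p.eval x * x ^ ((k : ℝ) + α) * rho (ν + 1) x = 0)

open Filter Topology Polynomial
open scoped Nat

lemma rpow_mul_exp_neg_le_factorial {c u : ℝ} (hc : 0 ≤ c) (hu : 0 ≤ u) :
    u ^ c * exp (-u) ≤ ⌈c⌉₊ ! := by
  have hfact : (1 : ℝ) ≤ ⌈c⌉₊ ! := by exact_mod_cast (⌈c⌉₊).factorial_pos
  rcases le_total u 1 with hu1 | hu1
  · calc u ^ c * exp (-u) ≤ 1 * 1 :=
          mul_le_mul (rpow_le_one hu hu1 hc) (exp_le_one_iff.2 (by linarith)) (by positivity)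
            zero_le_one
      _ ≤ _ := by rwa [one_mul]
  · have hpow : u ^ c ≤ u ^ ⌈c⌉₊ := by
      rw [← rpow_natCast]; exact rpow_le_rpow_of_exponent_le hu1 (Nat.le_ceil c)
    have hexp := pow_div_factorial_le_exp u hu ⌈c⌉₊
    rw [div_le_iff₀ (by positivity)] at hexp
    rw [exp_neg, ← div_eq_mul_inv, div_le_iff₀ (exp_pos u)]
    linarith [mul_comm (exp u) (⌈c⌉₊ ! : ℝ)]

lemma rho_integrand_le {μ c x t : ℝ} (hc : 0 ≤ c) (hx : 0 < x) (ht : 0 < t) :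
    t ^ (μ - 1) * exp (-t - x / t) ≤
      ⌈c⌉₊ ! * x ^ (-c) * (exp (-t) * t ^ (μ + c - 1)) := by
  have hxt : 0 < (x / t) ^ c := by positivity
  have h := rpow_mul_exp_neg_le_factorial hc (div_pos hx ht).le
  rw [← le_div_iff₀' hxt, div_rpow hx.le ht.le] at h
  have hsplit : exp (-t - x / t) = exp (-t) * exp (-(x / t)) := by
    rw [← exp_add]; ring_nf
  have hexp : t ^ (μ + c - 1) = t ^ (μ - 1) * t ^ c := by
    rw [← rpow_add ht]; ring_nf
  calc t ^ (μ - 1) * exp (-t - x / t)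
      ≤ t ^ (μ - 1) * (exp (-t) * (⌈c⌉₊ ! / (x ^ c / t ^ c))) := by
        rw [hsplit]; gcongr
    _ = _ := by
        rw [hexp, rpow_neg hx.le]
        field_simp

lemma integrableOn_rho_integrand (μ : ℝ) {x : ℝ} (hx : 0 < x) :
    IntegrableOn (fun t => t ^ (μ - 1) * exp (-t - x / t)) (Ioi 0) := by
  have hμ : 0 < μ + (|μ| + 1) := by linarith [neg_abs_le μ]
  refine ((GammaIntegral_convergent hμ).const_mul (⌈|μ| + 1⌉₊ ! * x ^ (-(|μ| + 1)))).mono'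
    (by fun_prop : Measurable fun t : ℝ => t ^ (μ - 1) * exp (-t - x / t)).aestronglyMeasurable
    ?_
  refine (ae_restrict_iff' measurableSet_Ioi).2 (Eventually.of_forall fun t (ht : 0 < t) => ?_)
  rw [norm_of_nonneg (by positivity)]
  exact rho_integrand_le (by positivity) hx ht

lemma rho_nonneg (μ x : ℝ) : 0 ≤ rho μ x :=
  setIntegral_nonneg measurableSet_Ioi fun t (ht : 0 < t) => by positivity

lemma rho_le {μ c x : ℝ} (hc : 0 ≤ c) (hμc : 0 < μ + c) (hx : 0 < x) :
    rho μ x ≤ ⌈c⌉₊ ! * Gamma (μ + c) * x ^ (-c) := by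
  rw [Gamma_eq_integral hμc]
  calc rho μ x ≤ ∫ t in Ioi 0, ⌈c⌉₊ ! * x ^ (-c) * (exp (-t) * t ^ (μ + c - 1)) :=
        setIntegral_mono_on (integrableOn_rho_integrand μ hx)
          ((GammaIntegral_convergent hμc).const_mul _) measurableSet_Ioi
          fun t ht => rho_integrand_le hc hx ht
    _ = _ := by rw [integral_const_mul]; ring

lemma hasDerivAt_rho (μ : ℝ) {x : ℝ} (hx : 0 < x) :
    HasDerivAt (rho μ) (-rho (μ - 1) x) x := by
  have hx2 : 0 < x / 2 := half_pos hx
  have key := hasDerivAt_integral_of_dominated_loc_of_deriv_le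
    (μ := volume.restrict (Ioi 0)) (x₀ := x) (s := Metric.ball x (x / 2))
    (F := fun y t => t ^ (μ - 1) * exp (-t - y / t))
    (F' := fun y t => -(t ^ (μ - 1 - 1) * exp (-t - y / t)))
    (bound := fun t => t ^ (μ - 1 - 1) * exp (-t - x / 2 / t))
    (Metric.ball_mem_nhds x hx2)
    (Eventually.of_forall fun y => (by fun_prop : Measurable fun t : ℝ =>
      t ^ (μ - 1) * exp (-t - y / t)).aestronglyMeasurable)
    (integrableOn_rho_integrand μ hx)
    (by fun_prop : Measurable fun t : ℝ =>
      -(t ^ (μ - 1 - 1) * exp (-t - x / t))).aestronglyMeasurable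
    ?_ (integrableOn_rho_integrand (μ - 1) hx2) ?_
  · rw [integral_neg] at key
    exact key.2
  · refine (ae_restrict_iff' measurableSet_Ioi).2
      (Eventually.of_forall fun t (ht : 0 < t) y hy => ?_)
    have hy : x / 2 ≤ y := by
      linarith [(abs_lt.mp (mem_ball_iff_norm.mp hy)).1]
    rw [norm_neg, norm_of_nonneg (by positivity)]
    gcongr
  · refine (ae_restrict_iff' measurableSet_Ioi).2
      (Eventually.of_forall fun t (ht : 0 < t) y _ => ?_)
    have hinner : HasDerivAt (fun y => -t - y / t) (-t⁻¹) y := by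
      simpa using ((hasDerivAt_id y).div_const t).const_sub (-t)
    refine (hinner.exp.const_mul (t ^ (μ - 1))).congr_deriv ?_
    rw [show μ - 1 - 1 = (μ - 1) + (-1) by ring, rpow_add ht, rpow_neg_one]
    ring

lemma integral_Ioi_eq_zero_of_hasDerivAt_of_tendsto {f f' : ℝ → ℝ} {a : ℝ}
    (hderiv : ∀ x ∈ Ioi a, HasDerivAt f (f' x) x) (hint : IntegrableOn f' (Ioi a))
    (ha : Tendsto f (𝓝[>] a) (𝓝 0)) (htop : Tendsto f atTop (𝓝 0)) :
    ∫ x in Ioi a, f' x = 0 := by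
  simpa using integral_Ioi_deriv_mul_eq_sub (v := fun _ => 1) (v' := fun _ => 0)
    (a' := 0) (b' := 0) hderiv
    (fun x _ => hasDerivAt_const x 1) (by convert hint using 1; ext x; simp)
    (by convert ha using 1; ext x; simp) (by convert htop using 1; ext x; simp)

lemma tendsto_const_mul_rpow_nhds_zero (C : ℝ) {s : ℝ} (hs : 0 < s) :
    Tendsto (fun x : ℝ => C * x ^ s) (𝓝 0) (𝓝 0) := by
  simpa [zero_rpow hs.ne'] using (continuousAt_rpow_const 0 s (.inr hs.le)).tendsto.const_mul C

lemma rho_add_one (μ : ℝ) {x : ℝ} (hx : 0 < x) :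
    rho (μ + 1) x = μ * rho μ x + x * rho (μ - 1) x := by
  set f : ℝ → ℝ → ℝ := fun s t => t ^ (s - 1) * exp (-t - x / t) with hf
  have hderiv : ∀ t ∈ Ioi (0:ℝ), HasDerivAt (fun t => t ^ μ * exp (-t - x / t))
      (μ * f μ t + x * f (μ - 1) t - f (μ + 1) t) t := by
    intro t (ht : 0 < t)
    have hinner : HasDerivAt (fun t => -t - x / t) (-1 - x * -(t ^ 2)⁻¹) t := by
      simp only [div_eq_mul_inv]
      exact (hasDerivAt_neg' t).sub ((hasDerivAt_inv ht.ne').const_mul x)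
    refine ((hasDerivAt_rpow_const (p := μ) (.inl ht.ne')).mul hinner.exp).congr_deriv ?_
    simp only [hf]
    rw [show μ - 1 - 1 = μ + (-2) by ring, rpow_add ht, add_sub_cancel_right,
      show (-2 : ℝ) = ((-2 : ℤ) : ℝ) by norm_num, rpow_intCast]
    field_simp
    ring
  have hI : ∀ s, IntegrableOn (f s) (Ioi 0) := fun s => integrableOn_rho_integrand s hx
  have hI' := ((hI μ).const_mul μ).add ((hI (μ - 1)).const_mul x)
  have hc : 0 < μ + 1 + (|μ| + 1) - 1 := by linarith [neg_abs_le μ]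
  have hzero : Tendsto (fun t => t ^ μ * exp (-t - x / t)) (𝓝[>] 0) (𝓝 0) := by
    refine squeeze_zero' (eventually_mem_nhdsWithin.mono fun t (ht : 0 < t) => by positivity)
      (eventually_mem_nhdsWithin.mono fun t (ht : 0 < t) => ?_)
      ((tendsto_const_mul_rpow_nhds_zero (⌈|μ| + 1⌉₊ ! * x ^ (-(|μ| + 1))) hc).mono_left
        nhdsWithin_le_nhds)
    have h := rho_integrand_le (μ := μ + 1) (c := |μ| + 1) (by positivity) hx ht
    rw [add_sub_cancel_right] at h
    refine h.trans (mul_le_mul_of_nonneg_left ?_ (by positivity))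
    exact mul_le_of_le_one_left (by positivity) (exp_le_one_iff.2 (by linarith))
  have htop : Tendsto (fun t => t ^ μ * exp (-t - x / t)) atTop (𝓝 0) := by
    refine squeeze_zero' (eventually_gt_atTop 0 |>.mono fun t ht => by positivity)
      (eventually_gt_atTop 0 |>.mono fun t ht => ?_)
      (tendsto_rpow_mul_exp_neg_mul_atTop_nhds_zero μ 1 one_pos)
    gcongr
    linarith [div_pos hx ht]
  have h := integral_Ioi_eq_zero_of_hasDerivAt_of_tendsto hderiv (hI'.sub (hI (μ + 1))) hzero htop
  rw [integral_sub, integral_add, integral_const_mul, integral_const_mul] at h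
  · simp only [hf, rho] at h ⊢
    linarith
  exacts [(hI μ).const_mul μ, (hI (μ - 1)).const_mul x, hI', hI (μ + 1)]

lemma rpow_mul_rho_le {μ c ε x : ℝ} (hε : 0 ≤ ε) (hμε : 0 < μ + ε) (hx : 0 < x) :
    x ^ c * rho μ x ≤ ⌈ε⌉₊ ! * Gamma (μ + ε) * x ^ (c - ε) := by
  calc x ^ c * rho μ x ≤ x ^ c * (⌈ε⌉₊ ! * Gamma (μ + ε) * x ^ (-ε)) := by
        gcongr; exact rho_le hε hμε hx
    _ = _ := by rw [sub_eq_add_neg, rpow_add hx]; ring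

lemma continuousOn_rho (μ : ℝ) : ContinuousOn (rho μ) (Ioi 0) :=
  fun _ hx => (hasDerivAt_rho μ hx).continuousAt.continuousWithinAt

lemma integrableOn_rpow_mul_rho_of_integrableOn_rpow {μ c ε : ℝ} {s : Set ℝ}
    (hs : s ⊆ Ioi 0) (hsm : MeasurableSet s) (hε : 0 ≤ ε) (hμε : 0 < μ + ε)
    (hint : IntegrableOn (fun x => x ^ (c - ε)) s) :
    IntegrableOn (fun x => x ^ c * rho μ x) s := by
  refine (hint.const_mul (⌈ε⌉₊ ! * Gamma (μ + ε))).mono' ?_ ?_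
  · exact ((continuousOn_id.rpow_const fun x hx => .inl (hs hx).ne').mul
      ((continuousOn_rho μ).mono hs)).aestronglyMeasurable hsm
  · refine (ae_restrict_iff' hsm).2 (Eventually.of_forall fun x hx => ?_)
    have hx : 0 < x := hs hx
    rw [norm_of_nonneg (mul_nonneg (rpow_nonneg hx.le c) (rho_nonneg μ x))]
    exact rpow_mul_rho_le hε hμε hx

lemma integrableOn_rpow_mul_rho {μ c : ℝ} (hc : -1 < c) (hcμ : -1 < c + μ) :
    IntegrableOn (fun x => x ^ c * rho μ x) (Ioi 0) := by
  -- compare with `x ^ (c - ε)`, where `c - ε > -1` near `0` and `c - ε < -1` near `∞`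
  rw [← Ioc_union_Ioi_eq_Ioi zero_le_one]
  refine IntegrableOn.union ?_ ?_
  · obtain ⟨ε, hε, hεc⟩ :=
      exists_between (max_lt (by linarith) (by linarith) : max (-μ) 0 < c + 1)
    rw [max_lt_iff] at hε
    exact integrableOn_rpow_mul_rho_of_integrableOn_rpow Ioc_subset_Ioi_self measurableSet_Ioc
      hε.2.le (by linarith) (intervalIntegral.intervalIntegrable_rpow' (by linarith)).1
  · exact integrableOn_rpow_mul_rho_of_integrableOn_rpow (Ioi_subset_Ioi zero_le_one)
      measurableSet_Ioi (ε := |c| + |μ| + 2) (by positivity)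
      (by linarith [neg_abs_le μ, abs_nonneg c])
      (integrableOn_Ioi_rpow_of_lt (by linarith [le_abs_self c, abs_nonneg μ]) one_pos)

lemma tendsto_rpow_mul_rho_atTop (μ c : ℝ) :
    Tendsto (fun x => x ^ c * rho μ x) atTop (𝓝 0) := by
  have hlim := (tendsto_rpow_neg_atTop (y := |c| + |μ| + 1 - c)
    (by linarith [le_abs_self c, abs_nonneg μ])).const_mul
    (⌈|c| + |μ| + 1⌉₊ ! * Gamma (μ + (|c| + |μ| + 1)))
  rw [mul_zero, neg_sub] at hlim
  refine squeeze_zero' (eventually_gt_atTop 0 |>.mono fun x hx => ?_)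
    (eventually_gt_atTop 0 |>.mono fun x hx => ?_) hlim
  · exact mul_nonneg (rpow_nonneg hx.le c) (rho_nonneg μ x)
  · exact rpow_mul_rho_le (by positivity) (by linarith [neg_abs_le μ, abs_nonneg c]) hx

lemma tendsto_rpow_mul_rho_nhdsGT_zero {μ c : ℝ} (hc : 0 < c) (hcμ : 0 < c + μ) :
    Tendsto (fun x => x ^ c * rho μ x) (𝓝[>] 0) (𝓝 0) := by
  obtain ⟨ε, hε, hεc⟩ := exists_between (max_lt (by linarith) hc : max (-μ) 0 < c)
  rw [max_lt_iff] at hε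
  refine squeeze_zero' (eventually_mem_nhdsWithin.mono fun x (hx : 0 < x) => ?_)
    (eventually_mem_nhdsWithin.mono fun x (hx : 0 < x) => ?_)
    ((tendsto_const_mul_rpow_nhds_zero (⌈ε⌉₊ ! * Gamma (μ + ε)) (sub_pos.2 hεc)).mono_left
      nhdsWithin_le_nhds)
  · exact mul_nonneg (rpow_nonneg hx.le c) (rho_nonneg μ x)
  · exact rpow_mul_rho_le hε.2.le (by linarith) hx

lemma eval_mul_rpow_mul_eq_sum (p : ℝ[X]) (c y : ℝ) {x : ℝ} (hx : 0 < x) :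
    p.eval x * x ^ c * y =
      ∑ i ∈ Finset.range (p.natDegree + 1), p.coeff i * (x ^ (c + i) * y) := by
  rw [eval_eq_sum_range, Finset.sum_mul, Finset.sum_mul]
  refine Finset.sum_congr rfl fun i _ => ?_
  rw [rpow_add hx, rpow_natCast]
  ring

lemma integrableOn_eval_mul_rpow_mul_rho (p : ℝ[X]) {μ c : ℝ} (hc : -1 < c)
    (hcμ : -1 < c + μ) :
    IntegrableOn (fun x => p.eval x * x ^ c * rho μ x) (Ioi 0) := by
  refine IntegrableOn.congr_fun (integrable_finsetSum _ fun i _ => ?_)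
    (fun x hx => (eval_mul_rpow_mul_eq_sum p c (rho μ x) hx).symm) measurableSet_Ioi
  have hi : (0 : ℝ) ≤ i := i.cast_nonneg
  exact (integrableOn_rpow_mul_rho (by linarith) (by linarith)).const_mul _

lemma tendsto_eval_mul_rpow_mul_rho_atTop (p : ℝ[X]) (μ c : ℝ) :
    Tendsto (fun x => p.eval x * x ^ c * rho μ x) atTop (𝓝 0) := by
  have hsum := tendsto_finsetSum (Finset.range (p.natDegree + 1)) fun i _ =>
    (tendsto_rpow_mul_rho_atTop μ (c + i)).const_mul (p.coeff i)
  simp only [mul_zero, Finset.sum_const_zero] at hsum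
  exact hsum.congr' (eventually_gt_atTop 0 |>.mono fun x hx =>
    (eval_mul_rpow_mul_eq_sum p c (rho μ x) hx).symm)

lemma tendsto_eval_mul_rpow_mul_rho_nhdsGT_zero (p : ℝ[X]) {μ c : ℝ} (hc : 0 < c)
    (hcμ : 0 < c + μ) :
    Tendsto (fun x => p.eval x * x ^ c * rho μ x) (𝓝[>] 0) (𝓝 0) := by
  have hsum := tendsto_finsetSum (Finset.range (p.natDegree + 1)) fun i _ =>
    have hi : (0 : ℝ) ≤ i := i.cast_nonneg
    (tendsto_rpow_mul_rho_nhdsGT_zero (μ := μ) (c := c + i) (by linarith)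
      (by linarith)).const_mul (p.coeff i)
  simp only [mul_zero, Finset.sum_const_zero] at hsum
  exact hsum.congr' (eventually_mem_nhdsWithin.mono fun x hx =>
    (eval_mul_rpow_mul_eq_sum p c (rho μ x) hx).symm)

lemma hasDerivAt_rpow_mul_rho (μ β : ℝ) {x : ℝ} (hx : 0 < x) :
    HasDerivAt (fun y => y ^ β * rho μ y)
      (x ^ (β - 1) * ((β + μ) * rho μ x - rho (μ + 1) x)) x := by
  refine ((hasDerivAt_rpow_const (p := β) (.inl hx.ne')).mul
    (hasDerivAt_rho μ hx)).congr_deriv ?_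
  have hxβ : x ^ β = x ^ (β - 1) * x := by rw [← rpow_add_one hx.ne', sub_add_cancel]
  rw [rho_add_one μ hx, hxβ]
  ring

lemma integral_derivative_mul_rpow_mul_rho (p : ℝ[X]) {μ β : ℝ} (hβ : 0 < β)
    (hβμ : 0 < β + μ) :
    ∫ x in Ioi 0, (derivative p).eval x * x ^ β * rho μ x =
      (∫ x in Ioi 0, p.eval x * x ^ (β - 1) * rho (μ + 1) x) -
        (β + μ) * ∫ x in Ioi 0, p.eval x * x ^ (β - 1) * rho μ x := by
  have hderiv : ∀ x ∈ Ioi (0 : ℝ), HasDerivAt (fun x => p.eval x * x ^ β * rho μ x)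
      ((derivative p).eval x * x ^ β * rho μ x +
        (β + μ) * (p.eval x * x ^ (β - 1) * rho μ x) -
          p.eval x * x ^ (β - 1) * rho (μ + 1) x) x := by
    intro x (hx : 0 < x)
    simp only [mul_assoc]
    refine ((p.hasDerivAt x).mul (hasDerivAt_rpow_mul_rho μ β hx)).congr_deriv ?_
    ring
  have hI₁ := integrableOn_eval_mul_rpow_mul_rho (derivative p) (μ := μ) (c := β)
    (by linarith) (by linarith)
  have hI₂ := integrableOn_eval_mul_rpow_mul_rho p (μ := μ) (c := β - 1)
    (by linarith) (by linarith)
  have hI₃ := integrableOn_eval_mul_rpow_mul_rho p (μ := μ + 1) (c := β - 1)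
    (by linarith) (by linarith)
  have h := integral_Ioi_eq_zero_of_hasDerivAt_of_tendsto hderiv
    ((hI₁.add (hI₂.const_mul _)).sub hI₃)
    (tendsto_eval_mul_rpow_mul_rho_nhdsGT_zero p hβ hβμ)
    (tendsto_eval_mul_rpow_mul_rho_atTop p μ β)
  rw [integral_sub, integral_add, integral_const_mul] at h
  · linarith
  exacts [hI₁, hI₂.const_mul _, hI₁.add (hI₂.const_mul _), hI₃]

lemma integral_eval_mul_rpow_mul_rho_add_two (p : ℝ[X]) {μ c : ℝ} (hc : -1 < c)
    (hcμ : -1 < c + μ) :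
    ∫ x in Ioi 0, p.eval x * x ^ c * rho (μ + 1 + 1) x =
      (μ + 1) * (∫ x in Ioi 0, p.eval x * x ^ c * rho (μ + 1) x) +
        ∫ x in Ioi 0, p.eval x * x ^ (c + 1) * rho μ x := by
  rw [← integral_const_mul, ← integral_add
    ((integrableOn_eval_mul_rpow_mul_rho p hc (by linarith)).const_mul _)
    (integrableOn_eval_mul_rpow_mul_rho p (by linarith) (by linarith))]
  refine setIntegral_congr_fun measurableSet_Ioi fun x (hx : 0 < x) => ?_
  rw [rho_add_one (μ + 1) hx, add_sub_cancel_right, rpow_add_one hx.ne']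
  ring

lemma Polynomial.Monic.C_inv_natDegree_mul_derivative {F : Type*} [Field F] [CharZero F]
    {p : F[X]} (hp : p.Monic) (hd : p.natDegree ≠ 0) :
    (C (p.natDegree : F)⁻¹ * derivative p).Monic :=
  monic_C_mul_of_mul_leadingCoeff_eq_one <| by
    rw [leadingCoeff_derivative, hp.leadingCoeff, one_mul]
    exact inv_mul_cancel₀ (Nat.cast_ne_zero.2 hd)

namespace IsType2MOP

variable {ν α : ℝ} {n m : ℕ} {P : ℝ[X]}

lemma derivative_orthogonal_rho (hP : IsType2MOP ν α n m P) (hν : 0 ≤ ν) (hα : -1 < α)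
    {k : ℕ} (hkn : k < n) (hkm : k < m) :
    ∫ x in Ioi 0, (derivative P).eval x * x ^ ((k : ℝ) + (α + 1)) * rho ν x = 0 := by
  have hk : (0 : ℝ) ≤ k := k.cast_nonneg
  rw [← add_assoc, integral_derivative_mul_rpow_mul_rho P (by linarith) (by linarith),
    add_sub_cancel_right, hP.2.2.1 k hkn, hP.2.2.2 k hkm, mul_zero, sub_zero]

lemma derivative_orthogonal_rho_add_one (hP : IsType2MOP ν α n m P) (hν : 0 ≤ ν)
    (hα : -1 < α) {k : ℕ} (hkn : k + 1 < n) (hkm : k < m) :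
    ∫ x in Ioi 0, (derivative P).eval x * x ^ ((k : ℝ) + (α + 1)) * rho (ν + 1) x = 0 := by
  have hk : (0 : ℝ) ≤ k := k.cast_nonneg
  have hsucc := hP.2.2.1 (k + 1) hkn
  rw [Nat.cast_succ, add_right_comm] at hsucc
  rw [← add_assoc, integral_derivative_mul_rpow_mul_rho P (by linarith) (by linarith),
    add_sub_cancel_right, integral_eval_mul_rpow_mul_rho_add_two P (by linarith) (by linarith),
    hP.2.2.2 k hkm, hsucc]
  ring

lemma C_inv_mul_derivative (hP : IsType2MOP ν α n (n - 1) P) (hν : 0 ≤ ν) (hα : -1 < α)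
    (hn : 1 ≤ n) :
    IsType2MOP ν (α + 1) (n - 1) (n - 1) (C ((2 * n - 1 : ℕ) : ℝ)⁻¹ * derivative P) := by
  have hdeg : P.natDegree = 2 * n - 1 := by rw [hP.2.1]; omega
  have hscale : ∀ e μ : ℝ,
      ∫ x in Ioi 0, (C ((2 * n - 1 : ℕ) : ℝ)⁻¹ * derivative P).eval x * x ^ e * rho μ x =
        ((2 * n - 1 : ℕ) : ℝ)⁻¹ * ∫ x in Ioi 0, (derivative P).eval x * x ^ e * rho μ x :=
    fun e μ => by simp only [eval_mul, eval_C, mul_assoc, integral_const_mul]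
  refine ⟨?_, ?_, fun k hk => ?_, fun k hk => ?_⟩
  · rw [← hdeg]; exact hP.1.C_inv_natDegree_mul_derivative (by omega)
  · rw [natDegree_C_mul (inv_ne_zero (Nat.cast_ne_zero.2 (by omega))), natDegree_derivative, hdeg]
    omega
  · rw [hscale, hP.derivative_orthogonal_rho hν hα (by omega) hk, mul_zero]
  · rw [hscale, hP.derivative_orthogonal_rho_add_one hν hα (by omega) hk, mul_zero]

end IsType2MOP

theorem type2_deriv_nnm1_general (ν α : ℝ) (hν : 0 ≤ ν) (hα : -1 < α) (n : ℕ) (hn : 1 ≤ n)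
    (P Q : Polynomial ℝ)
    (hP : IsType2MOP ν α n (n - 1) P)
    (hQuniq : ∀ R : Polynomial ℝ, IsType2MOP ν (α + 1) (n - 1) (n - 1) R → R = Q) :
    Polynomial.derivative P = Polynomial.C ((2 * n - 1 : ℕ) : ℝ) * Q := by
  have hd : ((2 * n - 1 : ℕ) : ℝ) ≠ 0 := Nat.cast_ne_zero.2 (by omega)
  rw [← hQuniq _ (hP.C_inv_mul_derivative hν hα hn), ← mul_assoc, ← C_mul,
    mul_inv_cancel₀ hd, C_1, one_mul]

theorem type2_deriv_nnm1 (ν α : ℝ) (hν : 0 ≤ ν) (hα : -1 < α) (n : ℕ) (hn : 1 ≤ n)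
    (P Q : Polynomial ℝ)
    (hP : IsType2MOP ν α n (n - 1) P) (hQ : IsType2MOP ν (α + 1) (n - 1) (n - 1) Q)
    (hQuniq : ∀ R : Polynomial ℝ, IsType2MOP ν (α + 1) (n - 1) (n - 1) R → R = Q) :
    Polynomial.derivative P = Polynomial.C ((2 * n - 1 : ℕ) : ℝ) * Q :=
  type2_deriv_nnm1_general ν α hν hα n hn P Q hP hQuniq
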